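/- arXiv:math/0601466 — 4 statements merged into one kernel-verified Lean document; each statement's English description precedes it below -/
import Mathlib

section
/- The function φ(x) = (1/2) log |x − x₀|² is a limiting Carleman weight on any open set not containing x₀, i.e., ∇φ is non-vanishing there and ⟨φ''∇φ, ∇φ⟩ + ⟨φ''ξ, ξ⟩ = 0 whenever |ξ|² = |∇φ|² and ∇φ·ξ = 0. -/
open scoped RealInnerProductSpace

noncomputable section

abbrev En (n : ℕ) := EuclideanSpace ℝ (Fin n)

/-- Hessian bilinear form `⟨φ''(x) v, w⟩`. -/
def hess {n : ℕ} (φ : En n → ℝ) (x v w : En n) : ℝ :=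
  fderiv ℝ (fun y => fderiv ℝ φ y v) x w

section aux

variable {n : ℕ} (x₀ : En n)

lemma hq (y : En n) :
    HasFDerivAt (fun y : En n => ‖y - x₀‖ ^ 2) ((2 : ℝ) • innerSL ℝ (y - x₀)) y := by
  have h1 : HasFDerivAt (fun y : En n => y - x₀) (ContinuousLinearMap.id ℝ (En n)) y :=
    (hasFDerivAt_id y).sub_const x₀
  have h2 := h1.norm_sq
  refine h2.congr_fderiv ?_
  ext w
  simp [two_smul]

lemma hphi {x : En n} (hx : x ≠ x₀) :
    HasFDerivAt (fun y : En n => (1 / 2 : ℝ) * Real.log (‖y - x₀‖ ^ 2))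
      (innerSL ℝ ((‖x - x₀‖ ^ 2 : ℝ)⁻¹ • (x - x₀))) x := by
  have hr2 : (‖x - x₀‖ ^ 2 : ℝ) ≠ 0 :=
    pow_ne_zero _ (norm_ne_zero_iff.mpr (sub_ne_zero.mpr hx))
  have hl := (Real.hasDerivAt_log hr2).comp_hasFDerivAt x (hq x₀ x)
  have h := hl.const_mul (1 / 2 : ℝ)
  refine h.congr_fderiv ?_
  ext w
  simp only [innerSL_apply_apply, ContinuousLinearMap.smul_apply, real_inner_smul_left, smul_eq_mul]
  ring

lemma hgrad {x : En n} (hx : x ≠ x₀) :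
    gradient (fun y : En n => (1 / 2 : ℝ) * Real.log (‖y - x₀‖ ^ 2)) x
      = (‖x - x₀‖ ^ 2 : ℝ)⁻¹ • (x - x₀) := by
  refine HasGradientAt.gradient ?_
  rw [hasGradientAt_iff_hasFDerivAt]
  have h := hphi x₀ hx
  exact h

lemma hhess {x : En n} (hx : x ≠ x₀) (v w : En n) :
    hess (fun y : En n => (1 / 2 : ℝ) * Real.log (‖y - x₀‖ ^ 2)) x v w
      = (‖x - x₀‖ ^ 2 : ℝ)⁻¹ * ⟪w, v⟫
        - 2 * ((‖x - x₀‖ ^ 2 : ℝ)⁻¹) ^ 2 * (⟪x - x₀, v⟫ * ⟪x - x₀, w⟫) := by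
  have hr2 : (‖x - x₀‖ ^ 2 : ℝ) ≠ 0 :=
    pow_ne_zero _ (norm_ne_zero_iff.mpr (sub_ne_zero.mpr hx))
  have hev : (fun y => fderiv ℝ (fun y : En n => (1 / 2 : ℝ) * Real.log (‖y - x₀‖ ^ 2)) y v)
      =ᶠ[nhds x] fun y => (‖y - x₀‖ ^ 2 : ℝ)⁻¹ * ⟪y - x₀, v⟫ := by
    have hmem : {x₀}ᶜ ∈ nhds x := isOpen_compl_singleton.mem_nhds hx
    filter_upwards [hmem] with y hy
    rw [(hphi x₀ hy).fderiv]
    simp only [innerSL_apply_apply, real_inner_smul_left]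
  have hinv := (hasDerivAt_inv hr2).comp_hasFDerivAt x (hq x₀ x)
  have hlin := ((hasFDerivAt_id x).sub_const x₀).inner ℝ (hasFDerivAt_const v x)
  have hmul := hinv.mul hlin
  have hmul' : HasFDerivAt (fun y : En n => (‖y - x₀‖ ^ 2 : ℝ)⁻¹ * ⟪y - x₀, v⟫)
      ((((fun y => y⁻¹) ∘ fun y : En n => ‖y - x₀‖ ^ 2) x •
          (fderivInnerCLM ℝ (id x - x₀, v)).comp
            ((ContinuousLinearMap.id ℝ (En n)).prod 0)) +
        (⟪id x - x₀, v⟫ •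
          ((-((‖x - x₀‖ ^ 2 : ℝ) ^ 2)⁻¹) • ((2 : ℝ) • innerSL ℝ (x - x₀))))) x := hmul
  rw [hess, hev.fderiv_eq, hmul'.fderiv]
  simp only [ContinuousLinearMap.add_apply, ContinuousLinearMap.smul_apply,
    ContinuousLinearMap.comp_apply, ContinuousLinearMap.prod_apply,
    ContinuousLinearMap.id_apply, ContinuousLinearMap.zero_apply,
    fderivInnerCLM_apply, innerSL_apply_apply, inner_zero_right, smul_eq_mul,
    Function.comp, id_eq, add_zero, zero_add]
  ring

end aux

/-- `φ(x) = (1/2) log |x - x₀|²` is a limiting Carleman weight on any open set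
not containing `x₀`. -/
theorem log_weight_is_limiting_carleman {n : ℕ} (x₀ : En n) (U : Set (En n))
    (hU : IsOpen U) (hx₀ : x₀ ∉ U) :
    ∀ x ∈ U,
      gradient (fun y => (1 / 2 : ℝ) * Real.log (‖y - x₀‖ ^ 2)) x ≠ 0 ∧
      ∀ ξ : En n,
        ‖ξ‖ ^ 2 = ‖gradient (fun y => (1 / 2 : ℝ) * Real.log (‖y - x₀‖ ^ 2)) x‖ ^ 2 →
        ⟪gradient (fun y => (1 / 2 : ℝ) * Real.log (‖y - x₀‖ ^ 2)) x, ξ⟫ = 0 →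
        hess (fun y => (1 / 2 : ℝ) * Real.log (‖y - x₀‖ ^ 2)) x
            (gradient (fun y => (1 / 2 : ℝ) * Real.log (‖y - x₀‖ ^ 2)) x)
            (gradient (fun y => (1 / 2 : ℝ) * Real.log (‖y - x₀‖ ^ 2)) x)
          + hess (fun y => (1 / 2 : ℝ) * Real.log (‖y - x₀‖ ^ 2)) x ξ ξ = 0 := by
  intro x hxU
  have hx : x ≠ x₀ := fun h => hx₀ (h ▸ hxU)
  have hr2 : (‖x - x₀‖ ^ 2 : ℝ) ≠ 0 :=
    pow_ne_zero _ (norm_ne_zero_iff.mpr (sub_ne_zero.mpr hx))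
  have hg := hgrad x₀ hx
  constructor
  · rw [hg]
    intro h
    rcases smul_eq_zero.mp h with h | h
    · exact inv_ne_zero hr2 h
    · exact sub_ne_zero.mpr hx h
  · intro ξ hnorm horth
    rw [hg] at hnorm horth ⊢
    rw [real_inner_smul_left] at horth
    have hpxi : ⟪x - x₀, ξ⟫ = 0 := by
      rcases mul_eq_zero.mp horth with h | h
      · exact absurd h (inv_ne_zero hr2)
      · exact h
    have hpp : ⟪x - x₀, x - x₀⟫ = ‖x - x₀‖ ^ 2 := real_inner_self_eq_norm_sq _
    have hxi2 : ⟪ξ, ξ⟫ = (‖x - x₀‖ ^ 2 : ℝ)⁻¹ := by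
      rw [real_inner_self_eq_norm_sq, hnorm, norm_smul, mul_pow, Real.norm_eq_abs, sq_abs]
      field_simp
    rw [hhess x₀ hx, hhess x₀ hx]
    simp only [real_inner_smul_left, real_inner_smul_right, hpp, hpxi, hxi2]
    field_simp
    ring
end
end

section
/- Let x₀ ∈ ℝⁿ, φ(x) = log|x − x₀| and ψ(x) = d_{S^{n−1}}((x−x₀)/|x−x₀|, ω) for a fixed ω ∈ S^{n−1}, defined where x ≠ x₀ and (x−x₀)/|x−x₀| ≠ ±ω. Then ψ solves the eikonal equations |∇ψ|² = |∇φ|² and ∇φ·∇ψ = 0. -/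
open scoped RealInnerProductSpace

noncomputable section

lemma grad_phi {n : ℕ} (x₀ x : En n) (hr : x - x₀ ≠ 0) :
    HasGradientAt (fun y => Real.log ‖y - x₀‖) ((‖x - x₀‖ ^ 2)⁻¹ • (x - x₀)) x := by
  have ha : (0:ℝ) < ‖x - x₀‖ ^ 2 := by
    have := norm_pos_iff.mpr hr
    positivity
  have hfun : (fun y : En n => Real.log ‖y - x₀‖)
      = (fun y : En n => (2:ℝ)⁻¹ * Real.log (‖y - x₀‖ ^ 2)) := by
    funext y
    rw [Real.log_pow]
    push_cast; ring
  rw [hfun]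
  have hA : HasFDerivAt (fun y : En n => ‖y - x₀‖ ^ 2)
      (2 • (innerSL ℝ (x - x₀)).comp (ContinuousLinearMap.id ℝ (En n))) x :=
    ((hasFDerivAt_id x).sub_const x₀).norm_sq
  have h := (hA.log ha.ne').const_mul (2:ℝ)⁻¹
  apply hasGradientAt_iff_hasFDerivAt.mpr
  apply h.congr_fderiv
  ext v
  simp [InnerProductSpace.toDual_apply_apply, real_inner_smul_left]
  field_simp

lemma grad_psi {n : ℕ} (x₀ ω x : En n) (hr : x - x₀ ≠ 0)
    (hlt : ⟪ω, x - x₀⟫ ^ 2 < ‖x - x₀‖ ^ 2) :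
    HasGradientAt (fun y => Real.pi / 2 -
        Real.arctan (⟪ω, y - x₀⟫ / Real.sqrt (‖y - x₀‖ ^ 2 - ⟪ω, y - x₀⟫ ^ 2)))
      ((‖x - x₀‖ ^ 2 * Real.sqrt (‖x - x₀‖ ^ 2 - ⟪ω, x - x₀⟫ ^ 2))⁻¹ •
        (⟪ω, x - x₀⟫ • (x - x₀) - ‖x - x₀‖ ^ 2 • ω)) x := by
  set r := x - x₀ with hrdef
  set a : ℝ := ‖r‖ ^ 2 with hadef
  set u : ℝ := ⟪ω, r⟫ with hudef
  have ha : (0:ℝ) < a := by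
    have := norm_pos_iff.mpr hr
    positivity
  have hpos : (0:ℝ) < a - u ^ 2 := by linarith
  set s : ℝ := Real.sqrt (a - u ^ 2) with hsdef
  have hs : (0:ℝ) < s := Real.sqrt_pos.mpr hpos
  have hs2 : s ^ 2 = a - u ^ 2 := Real.sq_sqrt hpos.le
  -- derivative of B y = ⟪ω, y - x₀⟫
  have hB : HasFDerivAt (fun y : En n => ⟪ω, y - x₀⟫) (innerSL ℝ ω) x := by
    have := (innerSL ℝ ω).hasFDerivAt.comp x ((hasFDerivAt_id x).sub_const x₀)
    exact this
  -- derivative of A y = ‖y - x₀‖ ^ 2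
  have hA : HasFDerivAt (fun y : En n => ‖y - x₀‖ ^ 2)
      (2 • (innerSL ℝ r).comp (ContinuousLinearMap.id ℝ (En n))) x :=
    ((hasFDerivAt_id x).sub_const x₀).norm_sq
  have hB2 : HasFDerivAt (fun y : En n => ⟪ω, y - x₀⟫ ^ 2)
      ((2 * u ^ 1) • innerSL ℝ ω) x :=
    by have := (hasDerivAt_pow 2 u).comp_hasFDerivAt x hB; simp only [pow_one, Nat.cast_ofNat, Nat.add_one_sub_one] at this ⊢; exact this
  have hC : HasFDerivAt (fun y : En n => ‖y - x₀‖ ^ 2 - ⟪ω, y - x₀⟫ ^ 2)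
      (2 • (innerSL ℝ r).comp (ContinuousLinearMap.id ℝ (En n)) - (2 * u ^ 1) • innerSL ℝ ω) x :=
    hA.sub hB2
  have hS : HasFDerivAt (fun y : En n => Real.sqrt (‖y - x₀‖ ^ 2 - ⟪ω, y - x₀⟫ ^ 2))
      ((1 / (2 * s)) • (2 • (innerSL ℝ r).comp (ContinuousLinearMap.id ℝ (En n))
        - (2 * u ^ 1) • innerSL ℝ ω)) x :=
    (Real.hasDerivAt_sqrt hpos.ne').comp_hasFDerivAt x hC
  have hSinv : HasFDerivAt
      (fun y : En n => (Real.sqrt (‖y - x₀‖ ^ 2 - ⟪ω, y - x₀⟫ ^ 2))⁻¹)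
      ((-(s ^ 2)⁻¹) • ((1 / (2 * s)) • (2 • (innerSL ℝ r).comp (ContinuousLinearMap.id ℝ (En n))
        - (2 * u ^ 1) • innerSL ℝ ω))) x :=
    (hasDerivAt_inv hs.ne').comp_hasFDerivAt x hS
  have hQ := hB.mul hSinv
  have hT := (Real.hasDerivAt_arctan (u * s⁻¹)).comp_hasFDerivAt x hQ
  have hΨ := (hasFDerivAt_const (Real.pi / 2) x).sub hT
  have hfun : (fun y : En n => Real.pi / 2 -
        Real.arctan (⟪ω, y - x₀⟫ / Real.sqrt (‖y - x₀‖ ^ 2 - ⟪ω, y - x₀⟫ ^ 2)))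
      = (fun y : En n => Real.pi / 2 -
        Real.arctan (⟪ω, y - x₀⟫ * (Real.sqrt (‖y - x₀‖ ^ 2 - ⟪ω, y - x₀⟫ ^ 2))⁻¹)) := by
    funext y; simp only [div_eq_mul_inv]
  rw [hfun]
  apply hasGradientAt_iff_hasFDerivAt.mpr
  apply hΨ.congr_fderiv
  ext v
  simp only [InnerProductSpace.toDual_apply_apply, ContinuousLinearMap.sub_apply,
    ContinuousLinearMap.add_apply, ContinuousLinearMap.smul_apply, ContinuousLinearMap.comp_apply,
    ContinuousLinearMap.coe_smul', Pi.smul_apply, ContinuousLinearMap.zero_apply,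
    innerSL_apply_apply, ContinuousLinearMap.id_apply, real_inner_smul_left, inner_sub_left,
    smul_eq_mul, one_div]
  simp only [← hrdef]
  simp only [← hudef, ← hadef]
  simp only [← hsdef]
  have h1 : 1 + (u * s⁻¹) ^ 2 = a / s ^ 2 := by
    field_simp
    linarith [hs2]
  rw [h1]
  rw [show a = s ^ 2 + u ^ 2 by linarith]
  field_simp
  ring

/-- With `φ(x) = log|x - x₀|` and `ψ(x) = d_{S^{n-1}}((x-x₀)/|x-x₀|, ω)
= π/2 - arctan( ω·(x-x₀) / √(|x-x₀|² - (ω·(x-x₀))²) )`, the eikonal equations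
`|∇ψ|² = |∇φ|²` and `∇φ·∇ψ = 0` hold wherever `x ≠ x₀` and
`(x-x₀)/|x-x₀| ≠ ±ω`. -/
theorem eikonal_equation {n : ℕ} (x₀ ω : En n) (hω : ‖ω‖ = 1) :
    ∀ x : En n, x ≠ x₀ →
      ‖x - x₀‖⁻¹ • (x - x₀) ≠ ω → ‖x - x₀‖⁻¹ • (x - x₀) ≠ -ω →
      ‖gradient (fun y => Real.pi / 2 -
          Real.arctan (⟪ω, y - x₀⟫ / Real.sqrt (‖y - x₀‖ ^ 2 - ⟪ω, y - x₀⟫ ^ 2))) x‖ ^ 2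
        = ‖gradient (fun y => Real.log ‖y - x₀‖) x‖ ^ 2 ∧
      ⟪gradient (fun y => Real.log ‖y - x₀‖) x,
        gradient (fun y => Real.pi / 2 -
          Real.arctan (⟪ω, y - x₀⟫ / Real.sqrt (‖y - x₀‖ ^ 2 - ⟪ω, y - x₀⟫ ^ 2))) x⟫ = 0 := by
  intro x hx1 hx2 hx3
  have hr : x - x₀ ≠ 0 := sub_ne_zero.mpr hx1
  have hn : (0:ℝ) < ‖x - x₀‖ := norm_pos_iff.mpr hr
  have hlt : ⟪ω, x - x₀⟫ ^ 2 < ‖x - x₀‖ ^ 2 := by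
    by_contra hcon
    push_neg at hcon
    have hle : |⟪ω, x - x₀⟫| ≤ ‖ω‖ * ‖x - x₀‖ := abs_real_inner_le_norm ω (x - x₀)
    rw [hω, one_mul] at hle
    have h' : ‖x - x₀‖ ≤ |⟪ω, x - x₀⟫| := by
      nlinarith [abs_nonneg (⟪ω, x - x₀⟫), sq_abs (⟪ω, x - x₀⟫)]
    have habs : |⟪ω, x - x₀⟫| = ‖x - x₀‖ := le_antisymm hle h'
    rcases (abs_eq (norm_nonneg (x - x₀))).mp habs with h1 | h1
    · have : ⟪ω, x - x₀⟫ = ‖ω‖ * ‖x - x₀‖ := by rw [hω, one_mul]; exact h1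
      have h2 := inner_eq_norm_mul_iff_real.mp this
      rw [hω, one_smul] at h2
      have h3 : ‖x - x₀‖⁻¹ • (‖x - x₀‖ • ω) = ω := by
        rw [smul_smul, inv_mul_cancel₀ hn.ne', one_smul]
      rw [h2] at h3
      exact hx2 h3
    · have : ⟪ω, -(x - x₀)⟫ = ‖ω‖ * ‖-(x - x₀)‖ := by
        rw [inner_neg_right, hω, one_mul, norm_neg, h1, neg_neg]
      have h2 := inner_eq_norm_mul_iff_real.mp this
      rw [hω, one_smul, norm_neg] at h2
      have h3 : ‖x - x₀‖⁻¹ • (‖x - x₀‖ • ω) = ω := by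
        rw [smul_smul, inv_mul_cancel₀ hn.ne', one_smul]
      rw [h2, smul_neg] at h3
      exact hx3 (neg_eq_iff_eq_neg.mp h3)
  have hψ := (grad_psi x₀ ω x hr hlt).gradient
  have hφ := (grad_phi x₀ x hr).gradient
  rw [hψ, hφ]
  have hpos : (0:ℝ) < ‖x - x₀‖ ^ 2 - ⟪ω, x - x₀⟫ ^ 2 := by linarith
  set r := x - x₀ with hrdef
  set a : ℝ := ‖r‖ ^ 2 with hadef
  set u : ℝ := ⟪ω, r⟫ with hudef
  set s : ℝ := Real.sqrt (a - u ^ 2) with hsdef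
  have ha : (0:ℝ) < a := by positivity
  have hs : (0:ℝ) < s := Real.sqrt_pos.mpr hpos
  have hs2 : s ^ 2 = a - u ^ 2 := Real.sq_sqrt hpos.le
  have hω1 : ⟪ω, ω⟫ = (1:ℝ) := by
    rw [real_inner_self_eq_norm_sq, hω]; norm_num
  have har : ⟪r, r⟫ = a := real_inner_self_eq_norm_sq r
  have hru : ⟪r, ω⟫ = u := (real_inner_comm r ω).symm
  constructor
  · rw [← real_inner_self_eq_norm_sq, ← real_inner_self_eq_norm_sq]
    simp only [real_inner_smul_left, real_inner_smul_right, inner_sub_left, inner_sub_right,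
      har, hru, hudef.symm, hω1]
    field_simp
    linear_combination (-1) * hs2
  · simp only [real_inner_smul_left, real_inner_smul_right, inner_sub_right, har, hru]
    ring
end
end

section
/- With t = x₁, r = |x'| > 0 and z = t + ir in the upper half plane, the Euclidean Laplacian of φ + iψ = log z on ℝⁿ (for n ≥ 3, x' ≠ 0) equals Δ_x(φ + iψ) = (n−2)i/(r z). -/
open Complex

noncomputable section

/-- Partial derivative `∂_j f` of a complex-valued function on `ℝⁿ`. -/
def pd {n : ℕ} (j : Fin n) (f : En n → ℂ) (x : En n) : ℂ :=
  fderiv ℝ f x (EuclideanSpace.single j 1)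

namespace LaplacianPhaseAux

variable {n : ℕ}

/-- `Q y = ‖y‖² - y₀²`. -/
def Qf (i0 : Fin n) (y : En n) : ℝ := ‖y‖ ^ 2 - y i0 ^ 2

/-- `R y = √(Q y)`. -/
def Rf (i0 : Fin n) (y : En n) : ℝ := Real.sqrt (Qf i0 y)

/-- `Z y = y₀ + i R y`. -/
def Zf (i0 : Fin n) (y : En n) : ℂ := (y i0 : ℂ) + (Rf i0 y : ℂ) * I

/-- The function `φ + iψ`. -/
def Ff (i0 : Fin n) (y : En n) : ℂ :=
  (Real.log ‖y‖ : ℂ) + I * ((Real.pi / 2 : ℝ) - Real.arctan (y i0 / Real.sqrt (‖y‖ ^ 2 - y i0 ^ 2)))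

variable {i0 : Fin n} {y x : En n}

lemma norm_sq_eq (y : En n) : ‖y‖ ^ 2 = ∑ j, y j ^ 2 := by
  rw [EuclideanSpace.norm_eq, Real.sq_sqrt (by positivity)]
  simp [Real.norm_eq_abs, sq_abs]

lemma Qf_eq : Qf i0 y = (∑ j, y j ^ 2) - y i0 ^ 2 := by rw [Qf, norm_sq_eq]

lemma R_pos (hy : 0 < Qf i0 y) : 0 < Rf i0 y := Real.sqrt_pos.2 hy

lemma R_sq (hy : 0 < Qf i0 y) : Rf i0 y ^ 2 = Qf i0 y := Real.sq_sqrt hy.le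

lemma norm_pos (hy : 0 < Qf i0 y) : 0 < ‖y‖ := by
  have h1 : 0 < ‖y‖ ^ 2 := lt_of_le_of_lt (sq_nonneg _) (by unfold Qf at hy; linarith)
  nlinarith [norm_nonneg y]

lemma Z_im : (Zf i0 y).im = Rf i0 y := by simp [Zf]

lemma Z_ne (hy : 0 < Qf i0 y) : Zf i0 y ≠ 0 := by
  intro h
  have h2 : (Zf i0 y).im = Rf i0 y := Z_im
  rw [h] at h2
  simp at h2
  exact absurd h2.symm (ne_of_gt (R_pos hy))

lemma Z_slit (hy : 0 < Qf i0 y) : Zf i0 y ∈ Complex.slitPlane := by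
  apply Complex.mem_slitPlane_iff.2
  right
  rw [Z_im]
  exact ne_of_gt (R_pos hy)

/-- key identity : `Ff = log ∘ Zf` where `Q > 0`. -/
lemma Ff_eq_log (hy : 0 < Qf i0 y) : Ff i0 y = Complex.log (Zf i0 y) := by
  have hR := R_pos hy
  have hN := norm_pos hy
  have hsum : y i0 ^ 2 + Rf i0 y ^ 2 = ‖y‖ ^ 2 := by
    rw [R_sq hy]; unfold Qf; ring
  have hw : Zf i0 y = Complex.exp ((Real.log ‖y‖ : ℂ) +
      ((Real.pi / 2 - Real.arctan (y i0 / Rf i0 y) : ℝ) : ℂ) * I) := by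
    rw [Complex.exp_add_mul_I]
    have h1 : Real.sqrt (1 + (y i0 / Rf i0 y) ^ 2) = ‖y‖ / Rf i0 y := by
      have h2 : 1 + (y i0 / Rf i0 y) ^ 2 = (‖y‖ / Rf i0 y) ^ 2 := by
        field_simp
        linarith
      rw [h2, Real.sqrt_sq (by positivity)]
    have hcos : Real.cos (Real.pi / 2 - Real.arctan (y i0 / Rf i0 y)) = y i0 / ‖y‖ := by
      rw [Real.cos_pi_div_two_sub, Real.sin_arctan, h1]
      field_simp
    have hsin : Real.sin (Real.pi / 2 - Real.arctan (y i0 / Rf i0 y)) = Rf i0 y / ‖y‖ := by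
      rw [Real.sin_pi_div_two_sub, Real.cos_arctan, h1]
      rw [one_div, inv_div]
    rw [← Complex.ofReal_exp, Real.exp_log hN, ← Complex.ofReal_cos, ← Complex.ofReal_sin,
      hcos, hsin]
    unfold Zf
    have hNne : (‖y‖ : ℂ) ≠ 0 := by exact_mod_cast ne_of_gt hN
    push_cast
    field_simp
  have harct1 := Real.arctan_lt_pi_div_two (y i0 / Rf i0 y)
  have harct2 := Real.neg_pi_div_two_lt_arctan (y i0 / Rf i0 y)
  have him : ((Real.log ‖y‖ : ℂ) +
      ((Real.pi / 2 - Real.arctan (y i0 / Rf i0 y) : ℝ) : ℂ) * I).im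
      = Real.pi / 2 - Real.arctan (y i0 / Rf i0 y) := by
    simp only [Complex.add_im, Complex.ofReal_im, Complex.mul_im, Complex.ofReal_re,
      Complex.I_im, Complex.I_re, mul_zero, mul_one, zero_add, add_zero]
  rw [hw, Complex.log_exp (by rw [him]; linarith [Real.pi_pos])
    (by rw [him]; linarith [Real.pi_pos])]
  unfold Ff
  have hRf : Real.sqrt (‖y‖ ^ 2 - y i0 ^ 2) = Rf i0 y := rfl
  rw [hRf]
  push_cast
  ring

/-- The derivative of `Qf`. -/
def LQ (i0 : Fin n) (y : En n) : En n →L[ℝ] ℝ :=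
  (∑ j, (2 * y j) • (EuclideanSpace.proj j : En n →L[ℝ] ℝ)) -
    (2 * y i0) • (EuclideanSpace.proj i0 : En n →L[ℝ] ℝ)

lemma LQ_apply (k : Fin n) : LQ i0 y (EuclideanSpace.single k 1) =
    if k = i0 then 0 else 2 * y k := by
  have hproj : ∀ j : Fin n, (EuclideanSpace.proj j : En n →L[ℝ] ℝ) (EuclideanSpace.single k 1)
      = if j = k then 1 else 0 := fun j => EuclideanSpace.single_apply k 1 j
  simp only [LQ, ContinuousLinearMap.sub_apply, ContinuousLinearMap.sum_apply,
    ContinuousLinearMap.smul_apply, hproj, smul_eq_mul]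
  have hterm : ∀ j : Fin n, 2 * y j * (if j = k then 1 else 0)
      = if j = k then 2 * y j else 0 := fun j => by split <;> ring
  rw [Finset.sum_congr rfl (fun j _ => hterm j), Finset.sum_ite_eq' Finset.univ k fun j => 2 * y j]
  by_cases hk : k = i0
  · subst hk; simp
  · rw [if_pos (Finset.mem_univ k), if_neg (show ¬ i0 = k from fun h => hk h.symm)]
    simp [hk]

lemma hasFDerivAt_Q (y : En n) : HasFDerivAt (Qf i0) (LQ i0 y) y := by
  have h1 : HasFDerivAt (fun y : En n => ∑ j, y j ^ 2)
      (∑ j, (2 * y j) • (EuclideanSpace.proj j : En n →L[ℝ] ℝ)) y := by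
    apply HasFDerivAt.fun_sum
    intro j _
    have := (hasDerivAt_pow 2 (y j)).comp_hasFDerivAt y
      (EuclideanSpace.proj j : En n →L[ℝ] ℝ).hasFDerivAt
    simpa [Function.comp_def] using this
  have h2 : HasFDerivAt (fun y : En n => y i0 ^ 2)
      ((2 * y i0) • (EuclideanSpace.proj i0 : En n →L[ℝ] ℝ)) y := by
    have := (hasDerivAt_pow 2 (y i0)).comp_hasFDerivAt y
      (EuclideanSpace.proj i0 : En n →L[ℝ] ℝ).hasFDerivAt
    simpa [Function.comp_def] using this
  have h3 := h1.sub h2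
  have : Qf i0 = fun y : En n => (∑ j, y j ^ 2) - y i0 ^ 2 := funext fun y => Qf_eq
  rw [this]
  exact h3

lemma hasFDerivAt_R (hy : 0 < Qf i0 y) :
    HasFDerivAt (Rf i0) ((2 * Rf i0 y)⁻¹ • LQ i0 y) y := by
  have := (Real.hasDerivAt_sqrt (ne_of_gt hy)).comp_hasFDerivAt y (hasFDerivAt_Q y)
  have hRfun : Rf i0 = fun x => Real.sqrt (Qf i0 x) := rfl
  rw [hRfun]
  simpa [Rf, one_div, Function.comp_def] using this

/-- The derivative of `Zf`. -/
def ZL (i0 : Fin n) (y : En n) : En n →L[ℝ] ℂ :=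
  Complex.ofRealCLM.comp (EuclideanSpace.proj i0 : En n →L[ℝ] ℝ) +
    I • (Complex.ofRealCLM.comp ((2 * Rf i0 y)⁻¹ • LQ i0 y))

lemma hasFDerivAt_Z (hy : 0 < Qf i0 y) : HasFDerivAt (Zf i0) (ZL i0 y) y := by
  have h1 : HasFDerivAt (fun y : En n => (y i0 : ℂ))
      (Complex.ofRealCLM.comp (EuclideanSpace.proj i0 : En n →L[ℝ] ℝ)) y :=
    Complex.ofRealCLM.hasFDerivAt.comp y
      (EuclideanSpace.proj i0 : En n →L[ℝ] ℝ).hasFDerivAt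
  have h2 : HasFDerivAt (fun y : En n => (Rf i0 y : ℂ))
      (Complex.ofRealCLM.comp ((2 * Rf i0 y)⁻¹ • LQ i0 y)) y :=
    Complex.ofRealCLM.hasFDerivAt.comp y (hasFDerivAt_R hy)
  have h3 := h2.mul_const I
  have h4 : (fun y : En n => (Rf i0 y : ℂ) * I) = fun y : En n => I * (Rf i0 y : ℂ) := by
    funext w; ring
  rw [h4] at h3
  have h5 := h1.fun_add h3
  unfold Zf ZL
  have h6 : (fun w : En n => (w i0 : ℂ) + (Rf i0 w : ℂ) * I) = fun w : En n => (w i0 : ℂ) + I * (Rf i0 w : ℂ) := by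
    funext w; ring
  rw [h6]
  exact h5

lemma ZL_apply (hy : 0 < Qf i0 y) (k : Fin n) :
    ZL i0 y (EuclideanSpace.single k 1) =
      if k = i0 then 1 else ((y k : ℂ) / (Rf i0 y : ℂ)) * I := by
  have hproj : (EuclideanSpace.proj i0 : En n →L[ℝ] ℝ) (EuclideanSpace.single k 1)
      = if i0 = k then 1 else 0 := EuclideanSpace.single_apply k 1 i0
  have hR : (Rf i0 y : ℂ) ≠ 0 := by
    exact_mod_cast ne_of_gt (R_pos hy)
  simp only [ZL, ContinuousLinearMap.add_apply, ContinuousLinearMap.comp_apply,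
    ContinuousLinearMap.smul_apply, hproj, LQ_apply, Complex.ofRealCLM_apply, smul_eq_mul]
  by_cases hk : k = i0
  · simp [hk]
  · simp only [hk, if_false, (Ne.symm hk : ¬ i0 = k), ite_false]
    push_cast
    field_simp
    ring

lemma Q_cont : Continuous (Qf i0) := by
  unfold Qf
  fun_prop

lemma U_event (hx : 0 < Qf i0 x) : ∀ᶠ y in nhds x, 0 < Qf i0 y :=
  (Q_cont.tendsto x).eventually (eventually_gt_nhds hx)

lemma pd_Ff (hy : 0 < Qf i0 y) (k : Fin n) :
    pd k (Ff i0) y =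
      (if k = i0 then 1 else ((y k : ℂ) / (Rf i0 y : ℂ)) * I) / Zf i0 y := by
  have hev : Ff i0 =ᶠ[nhds y] fun w => Complex.log (Zf i0 w) :=
    (U_event hy).mono fun w hw => Ff_eq_log hw
  have hlog : HasFDerivAt (fun w => Complex.log (Zf i0 w)) ((Zf i0 y)⁻¹ • ZL i0 y) y :=
    (Complex.hasDerivAt_log (Z_slit hy)).comp_hasFDerivAt y (hasFDerivAt_Z hy)
  unfold pd
  rw [hev.fderiv_eq, hlog.fderiv, ContinuousLinearMap.smul_apply, ZL_apply hy k,
    smul_eq_mul, ← div_eq_inv_mul]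

lemma pd2_i0 (hx : 0 < Qf i0 x) : pd i0 (pd i0 (Ff i0)) x = -((Zf i0 x) ^ 2)⁻¹ := by
  have hev : pd i0 (Ff i0) =ᶠ[nhds x] fun w => (Zf i0 w)⁻¹ :=
    (U_event hx).mono fun w hw => by rw [pd_Ff hw i0]; simp
  have hinv : HasFDerivAt (fun w => (Zf i0 w)⁻¹) ((-(Zf i0 x ^ 2)⁻¹) • ZL i0 x) x :=
    (hasDerivAt_inv (Z_ne hx)).comp_hasFDerivAt x (hasFDerivAt_Z hx)
  show fderiv ℝ (pd i0 (Ff i0)) x (EuclideanSpace.single i0 1) = -((Zf i0 x) ^ 2)⁻¹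
  rw [hev.fderiv_eq, hinv.fderiv, ContinuousLinearMap.smul_apply, ZL_apply hx i0]
  simp

lemma proj_single (j k : Fin n) :
    (EuclideanSpace.proj j : En n →L[ℝ] ℝ) (EuclideanSpace.single k 1)
      = if j = k then 1 else 0 := EuclideanSpace.single_apply k 1 j

lemma pd2_ne (hx : 0 < Qf i0 x) (k : Fin n) (hk : k ≠ i0) :
    pd k (pd k (Ff i0)) x =
      I / ((Rf i0 x : ℂ) * Zf i0 x)
        - I * (x k : ℂ) ^ 2 * (Zf i0 x + I * (Rf i0 x : ℂ)) /
            ((Rf i0 x : ℂ) ^ 3 * (Zf i0 x) ^ 2) := by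
  have hRne : (Rf i0 x : ℂ) ≠ 0 := by exact_mod_cast ne_of_gt (R_pos hx)
  have hZne := Z_ne hx
  have hev : pd k (Ff i0) =ᶠ[nhds x]
      fun w => (I * (w k : ℂ)) * ((Rf i0 w : ℂ) * Zf i0 w)⁻¹ :=
    (U_event hx).mono fun w hw => by
      show pd k (Ff i0) w = I * (w k : ℂ) * ((Rf i0 w : ℂ) * Zf i0 w)⁻¹
      rw [pd_Ff hw k, if_neg hk, mul_inv, div_eq_mul_inv]
      ring
  have hc : HasFDerivAt (fun w : En n => I * (w k : ℂ))
      (I • (Complex.ofRealCLM.comp (EuclideanSpace.proj k : En n →L[ℝ] ℝ))) x :=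
    (Complex.ofRealCLM.hasFDerivAt.comp x
      (EuclideanSpace.proj k : En n →L[ℝ] ℝ).hasFDerivAt).const_mul I
  have hRZ : HasFDerivAt (fun w : En n => (Rf i0 w : ℂ) * Zf i0 w)
      ((Rf i0 x : ℂ) • ZL i0 x +
        (Zf i0 x) • (Complex.ofRealCLM.comp ((2 * Rf i0 x)⁻¹ • LQ i0 x))) x :=
    (Complex.ofRealCLM.hasFDerivAt.comp x (hasFDerivAt_R hx)).mul (hasFDerivAt_Z hx)
  have hRZne : (Rf i0 x : ℂ) * Zf i0 x ≠ 0 := mul_ne_zero hRne hZne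
  have hinv := (hasDerivAt_inv hRZne).comp_hasFDerivAt x hRZ
  have hinv2 : HasFDerivAt (fun w : En n => ((Rf i0 w : ℂ) * Zf i0 w)⁻¹) _ x := hinv
  have hprod := hc.fun_mul hinv2
  show fderiv ℝ (pd k (Ff i0)) x (EuclideanSpace.single k 1) = _
  rw [hev.fderiv_eq, hprod.fderiv]
  simp only [ContinuousLinearMap.add_apply, ContinuousLinearMap.smul_apply,
    ContinuousLinearMap.comp_apply, ZL_apply hx, LQ_apply, proj_single,
    Complex.ofRealCLM_apply, smul_eq_mul, if_neg hk, if_pos rfl, Function.comp_apply]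
  push_cast
  have h2 : (2:ℂ) * (2:ℂ)⁻¹ = 1 := mul_inv_cancel₀ two_ne_zero
  have hRR : (Rf i0 x : ℂ) * (Rf i0 x : ℂ)⁻¹ = 1 := mul_inv_cancel₀ hRne
  have hZZ : Zf i0 x * (Zf i0 x)⁻¹ = 1 := mul_inv_cancel₀ hZne
  have hI : I * I = -1 := I_mul_I
  simp only [div_eq_mul_inv, mul_inv, inv_pow]
  linear_combination (-(I * (x k : ℂ)^2 * Zf i0 x * ((Rf i0 x : ℂ)⁻¹)^3 * ((Zf i0 x)⁻¹)^2)) * h2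

end LaplacianPhaseAux

open LaplacianPhaseAux in
/-- With `t = x₁`, `r = |x'| > 0` and `z = t + ir`, the Euclidean Laplacian
of `φ + iψ = log z` on `ℝⁿ` (`n ≥ 3`, `x' ≠ 0`) is `Δ_x(φ + iψ) = (n-2) i / (r z)`. -/
theorem laplacian_phase {n : ℕ} (hn : 3 ≤ n) (x : En n)
    (h : (x ⟨0, by omega⟩) ^ 2 < ‖x‖ ^ 2) :
    (∑ j, pd j (pd j (fun y => (Real.log ‖y‖ : ℂ)
          + I * ((Real.pi / 2 : ℝ) - Real.arctan
              ((y ⟨0, by omega⟩) / Real.sqrt (‖y‖ ^ 2 - (y ⟨0, by omega⟩) ^ 2))))) x)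
    = ((n : ℂ) - 2) * I /
        ((Real.sqrt (‖x‖ ^ 2 - (x ⟨0, by omega⟩) ^ 2) : ℂ)
          * ((x ⟨0, by omega⟩ : ℂ) + (Real.sqrt (‖x‖ ^ 2 - (x ⟨0, by omega⟩) ^ 2) : ℂ) * I)) := by
  have h0 : 0 < n := by omega
  have hx : 0 < Qf (⟨0, h0⟩ : Fin n) x := by
    unfold Qf
    exact sub_pos.2 h
  set i0 : Fin n := ⟨0, h0⟩ with hi0
  have hRne : (Rf i0 x : ℂ) ≠ 0 := by exact_mod_cast ne_of_gt (R_pos hx)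
  have hZne := Z_ne hx
  have hgoal : (∑ j, pd j (pd j (Ff i0)) x)
      = ((n : ℂ) - 2) * I / ((Rf i0 x : ℂ) * Zf i0 x) := by
    rw [← Finset.add_sum_erase Finset.univ _ (Finset.mem_univ i0), pd2_i0 hx,
      Finset.sum_congr rfl fun j hj => pd2_ne hx j (Finset.ne_of_mem_erase hj)]
    rw [Finset.sum_sub_distrib, Finset.sum_const, Finset.card_erase_of_mem (Finset.mem_univ i0),
      Finset.card_univ, Fintype.card_fin]
    have hfact : ∀ j : Fin n,
        I * (x j : ℂ) ^ 2 * (Zf i0 x + I * (Rf i0 x : ℂ)) /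
            ((Rf i0 x : ℂ) ^ 3 * (Zf i0 x) ^ 2)
          = (((x j : ℝ) ^ 2 : ℝ) : ℂ) * (I * (Zf i0 x + I * (Rf i0 x : ℂ)) /
            ((Rf i0 x : ℂ) ^ 3 * (Zf i0 x) ^ 2)) := fun j => by push_cast; ring
    rw [Finset.sum_congr rfl fun j _ => hfact j, ← Finset.sum_mul]
    have hsumsq : (∑ j ∈ Finset.univ.erase i0, (((x j : ℝ) ^ 2 : ℝ) : ℂ))
        = ((Qf i0 x : ℝ) : ℂ) := by
      have hr : ∑ j ∈ Finset.univ.erase i0, (x j : ℝ) ^ 2 = Qf i0 x := by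
        have h2 := Finset.add_sum_erase Finset.univ (fun j => (x j : ℝ) ^ 2) (Finset.mem_univ i0)
        rw [Qf_eq, ← h2]
        ring
      rw [← hr]
      push_cast
      rfl
    rw [hsumsq]
    have hQR : ((Qf i0 x : ℝ) : ℂ) = (Rf i0 x : ℂ) ^ 2 := by
      rw [← R_sq hx]; push_cast; rfl
    rw [hQR]
    have hn1 : ((n - 1 : ℕ) : ℂ) = (n : ℂ) - 1 := by
      push_cast [Nat.cast_sub (by omega : 1 ≤ n)]; ring
    rw [nsmul_eq_mul, hn1]
    have hRR : (Rf i0 x : ℂ) * (Rf i0 x : ℂ)⁻¹ = 1 := mul_inv_cancel₀ hRne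
    have hZZ : Zf i0 x * (Zf i0 x)⁻¹ = 1 := mul_inv_cancel₀ hZne
    have hI : I * I = -1 := I_mul_I
    set R := (Rf i0 x : ℂ)
    set Z := Zf i0 x
    simp only [div_eq_mul_inv, mul_inv, inv_pow]
    linear_combination (-(I*R⁻¹*Z⁻¹*(1 + R*R⁻¹)) + (Z⁻¹)^2*((R*R⁻¹)^2 + R*R⁻¹ + 1)) * hRR +
      (-(I*R⁻¹*Z⁻¹*(R*R⁻¹)^2)) * hZZ + (-(R^3*(R⁻¹)^3*(Z⁻¹)^2)) * hI
  exact hgoal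
end
end

section
/- Let f be a continuous compactly supported function on ℝ³ such that ∫_P f dλ_P = 0 for every affine 2-plane P whose direction lies within δ > 0 of a fixed 2-plane direction, for some δ. If moreover the support of f lies on one side of one such plane, and this family of planes sweeps out ℝ³ connectedly from that plane, then f = 0. -/
open MeasureTheory
open scoped RealInnerProductSpace

noncomputable section

abbrev E3 := EuclideanSpace ℝ (Fin 3)


open Complex Filter
open scoped Real FourierTransform
lemma helg_entire (g : E3 → ℂ) (hg : Continuous g) (hgc : HasCompactSupport g)
    (a b : E3 → ℝ) (ha : Continuous a) (hb : Continuous b)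
    (R : ℝ) (hR : ∀ x, g x ≠ 0 → |b x| ≤ R) :
    Differentiable ℂ (fun z : ℂ =>
      ∫ x : E3, Complex.exp (-(2 * π * Complex.I) * ((a x : ℂ) + z * (b x : ℂ))) * g x) := by
  intro z₀
  set F : ℂ → E3 → ℂ := fun z x =>
    Complex.exp (-(2 * π * Complex.I) * ((a x : ℂ) + z * (b x : ℂ))) * g x with hF
  set F' : ℂ → E3 → ℂ := fun z x =>
    (-(2 * π * Complex.I) * (b x : ℂ)) * Complex.exp (-(2 * π * Complex.I) * ((a x : ℂ) + z * (b x : ℂ))) * g x with hF'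
  have hcont : ∀ z : ℂ, Continuous (F z) := by
    intro z
    apply Continuous.mul _ hg
    exact Complex.continuous_exp.comp (by continuity)
  have hcont' : Continuous (F' z₀) := by
    apply Continuous.mul _ hg
    apply Continuous.mul (by continuity)
    exact Complex.continuous_exp.comp (by continuity)
  have hsupp : ∀ z : ℂ, HasCompactSupport (F z) := fun z => hgc.mul_left
  have hre : ∀ (z : ℂ) (x : E3),
      (-(2 * π * Complex.I) * ((a x : ℂ) + z * (b x : ℂ))).re = 2 * π * b x * z.im := by
    intro z x
    simp [Complex.mul_re, Complex.add_re, Complex.mul_im, Complex.add_im]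
    ring
  have key := hasDerivAt_integral_of_dominated_loc_of_deriv_le (F := F) (F' := F')
    (μ := (volume : Measure E3)) (x₀ := z₀)
    (bound := fun x => (2 * π * R * Real.exp (2 * π * R * (‖z₀‖ + 1))) * ‖g x‖)
    (Metric.ball_mem_nhds z₀ zero_lt_one)
    (Eventually.of_forall fun z => (hcont z).aestronglyMeasurable)
    ((hcont z₀).integrable_of_hasCompactSupport (hsupp z₀))
    hcont'.aestronglyMeasurable
    ?_ ?_ ?_
  · exact ⟨_, key.2⟩
  · -- bound
    refine Eventually.of_forall fun x => fun z hz => ?_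
    by_cases hx : g x = 0
    · simp [hF', hx]
    · have hbx : |b x| ≤ R := hR x hx
      have hR0 : 0 ≤ R := le_trans (abs_nonneg _) hbx
      have hzim : |z.im| ≤ ‖z₀‖ + 1 := by
        have h1 : ‖z‖ ≤ ‖z₀‖ + 1 := by
          have := mem_ball_iff_norm.1 hz
          calc ‖z‖ ≤ ‖z₀‖ + ‖z - z₀‖ := by
                have := norm_sub_norm_le z z₀; linarith [norm_sub_rev z z₀ ▸ this]
            _ ≤ ‖z₀‖ + 1 := by
                have := le_of_lt this; linarith [norm_sub_rev z₀ z ▸ this]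
        exact le_trans (Complex.abs_im_le_norm z) h1
      have hnorm : ‖F' z x‖ =
          (2 * π * |b x|) * Real.exp (2 * π * b x * z.im) * ‖g x‖ := by
        simp only [hF', norm_mul, Complex.norm_exp, hre, norm_neg,
          Complex.norm_real, Real.norm_eq_abs, Complex.norm_I, Complex.norm_two]
        rw [_root_.abs_of_nonneg Real.pi_pos.le]
        ring
      rw [hnorm]
      have hexp : Real.exp (2 * π * b x * z.im) ≤ Real.exp (2 * π * R * (‖z₀‖ + 1)) := by
        apply Real.exp_le_exp.2
        calc 2 * π * b x * z.im ≤ |2 * π * b x * z.im| := le_abs_self _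
          _ = 2 * π * |b x| * |z.im| := by
              rw [abs_mul, abs_mul, abs_mul, _root_.abs_two, _root_.abs_of_nonneg Real.pi_pos.le]
          _ ≤ 2 * π * R * (‖z₀‖ + 1) := by
              apply mul_le_mul (by nlinarith [Real.pi_pos]) hzim (abs_nonneg _)
              positivity
      calc (2 * π * |b x|) * Real.exp (2 * π * b x * z.im) * ‖g x‖
          ≤ (2 * π * R) * Real.exp (2 * π * R * (‖z₀‖ + 1)) * ‖g x‖ := by
            apply mul_le_mul_of_nonneg_right _ (norm_nonneg _)
            apply mul_le_mul (by nlinarith [Real.pi_pos]) hexp (Real.exp_pos _).le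
            positivity
        _ = (2 * π * R * Real.exp (2 * π * R * (‖z₀‖ + 1))) * ‖g x‖ := by ring
  · exact ((hg.norm.integrable_of_hasCompactSupport hgc.norm).const_mul _)
  · refine Eventually.of_forall fun x => fun z hz => ?_
    have h1 : HasDerivAt (fun z : ℂ => -(2 * π * Complex.I) * ((a x : ℂ) + z * (b x : ℂ)))
        (-(2 * π * Complex.I) * (b x : ℂ)) z := by
      simpa using (((hasDerivAt_id z).mul_const ((b x : ℂ))).const_add ((a x : ℂ))).const_mul
        (-(2 * π * Complex.I))
    have h2 := (h1.cexp).mul_const (g x)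
    exact h2.congr_deriv (by ring)

lemma helg_radon (f : E3 → ℝ) (hf : Continuous f) (hfc : HasCompactSupport f)
    (b : OrthonormalBasis (Fin 3) ℝ E3) (r : ℝ)
    (h0 : ∀ c : ℝ, ∫ st : ℝ × ℝ, f (c • b 0 + st.1 • b 1 + st.2 • b 2) = 0) :
    𝓕 (fun x : E3 => (f x : ℂ)) (r • b 0) = 0 := by
  classical
  set Φ : ℝ × (ℝ × ℝ) → E3 := fun p =>
    b.measurableEquiv.symm ((MeasurableEquiv.toLp 2 (Fin 3 → ℝ))
      ((MeasurableEquiv.piFinSuccAbove (fun _ : Fin 3 => ℝ) 0).symm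
        (p.1, (MeasurableEquiv.finTwoArrow (α := ℝ)).symm p.2))) with hΦdef
  have hMP : MeasurePreserving Φ volume volume := by
    refine MeasurePreserving.comp (MeasurePreserving.symm _ b.measurePreserving_measurableEquiv)
      (MeasurePreserving.comp
        (PiLp.volume_preserving_toLp (Fin 3))
        (MeasurePreserving.comp
          (MeasurePreserving.symm _ (volume_preserving_piFinSuccAbove (fun _ : Fin 3 => ℝ) 0))
          ((MeasurePreserving.id volume).prod
            (MeasurePreserving.symm _ (volume_preserving_finTwoArrow ℝ)))))
  have hemb : MeasurableEmbedding Φ := by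
    refine MeasurableEmbedding.comp b.measurableEquiv.symm.measurableEmbedding
      (MeasurableEmbedding.comp (MeasurableEquiv.toLp 2 (Fin 3 → ℝ)).measurableEmbedding
        (MeasurableEmbedding.comp
          (MeasurableEquiv.piFinSuccAbove (fun _ : Fin 3 => ℝ) 0).symm.measurableEmbedding
          (MeasurableEmbedding.id.prodMap
            (MeasurableEquiv.finTwoArrow (α := ℝ)).symm.measurableEmbedding)))
  have hΦ : ∀ p : ℝ × (ℝ × ℝ), Φ p = p.1 • b 0 + p.2.1 • b 1 + p.2.2 • b 2 := by
    intro p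
    have h2 : (MeasurableEquiv.piFinSuccAbove (fun _ : Fin 3 => ℝ) 0).symm
        (p.1, ![p.2.1, p.2.2]) = Fin.insertNth 0 p.1 ![p.2.1, p.2.2] := rfl
    have h1 : (MeasurableEquiv.finTwoArrow (α := ℝ)).symm p.2 = ![p.2.1, p.2.2] := rfl
    set y : Fin 3 → ℝ := Fin.insertNth 0 p.1 ![p.2.1, p.2.2] with hy
    have hy0 : y 0 = p.1 := by simp [hy]
    have hy1 : y 1 = p.2.1 := by
      have : (1 : Fin 3) = (0 : Fin 3).succAbove 0 := rfl
      rw [hy, this, Fin.insertNth_apply_succAbove]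
      rfl
    have hy2 : y 2 = p.2.2 := by
      have : (2 : Fin 3) = (0 : Fin 3).succAbove 1 := rfl
      rw [hy, this, Fin.insertNth_apply_succAbove]
      rfl
    have hbrepr : Φ p = b.repr.symm ((WithLp.equiv 2 (Fin 3 → ℝ)).symm y) := rfl
    rw [hbrepr, ← OrthonormalBasis.sum_repr_symm, Fin.sum_univ_three]
    have : ∀ i : Fin 3, (WithLp.equiv 2 (Fin 3 → ℝ)).symm y i = y i := fun _ => rfl
    rw [this 0, this 1, this 2, hy0, hy1, hy2]
  have hinner : ∀ p : ℝ × (ℝ × ℝ), ⟪Φ p, r • b 0⟫ = r * p.1 := by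
    intro p
    rw [hΦ p, real_inner_smul_right, inner_add_left, inner_add_left,
      real_inner_smul_left, real_inner_smul_left, real_inner_smul_left]
    have h00 : ⟪b 0, b 0⟫ = 1 := by
      rw [real_inner_self_eq_norm_mul_norm, b.orthonormal.1 0]; norm_num
    have h10 : ⟪b 1, b 0⟫ = 0 := b.orthonormal.2 (by decide)
    have h20 : ⟪b 2, b 0⟫ = 0 := b.orthonormal.2 (by decide)
    rw [h00, h10, h20]
    ring
  -- the Fourier integrand
  set F : E3 → ℂ := fun x => Real.fourierChar (-⟪x, r • b 0⟫) • ((f x : ℂ)) with hFdef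
  have hFcont : Continuous F := by
    apply Continuous.smul _ (Complex.continuous_ofReal.comp hf)
    exact continuous_subtype_val.comp (Real.continuous_fourierChar.comp ((continuous_id.inner continuous_const).neg))
  have hFsupp : HasCompactSupport F := by
    apply HasCompactSupport.smul_left
    exact hfc.comp_left (g := Complex.ofReal) Complex.ofReal_zero
  have hFint : Integrable F := hFcont.integrable_of_hasCompactSupport hFsupp
  have hcomp : ∫ p : ℝ × (ℝ × ℝ), F (Φ p) = ∫ x : E3, F x := hMP.integral_comp hemb F
  have hFΦint : Integrable (fun p : ℝ × (ℝ × ℝ) => F (Φ p)) :=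
    (hMP.integrable_comp_emb hemb).2 hFint
  have h𝓕 : 𝓕 (fun x : E3 => (f x : ℂ)) (r • b 0) = ∫ x : E3, F x := rfl
  rw [h𝓕, ← hcomp]
  have hprodvol : (volume : Measure (ℝ × (ℝ × ℝ))) =
      (volume : Measure ℝ).prod (volume : Measure (ℝ × ℝ)) := rfl
  rw [show (fun p : ℝ × (ℝ × ℝ) => F (Φ p)) = fun p : ℝ × (ℝ × ℝ) =>
      Real.fourierChar (-(r * p.1)) • ((f (p.1 • b 0 + p.2.1 • b 1 + p.2.2 • b 2) : ℂ)) from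
    funext fun p => by rw [hFdef]; simp only; rw [hinner p, hΦ p]] at hcomp hFΦint ⊢
  rw [show (∫ (p : ℝ × ℝ × ℝ), Real.fourierChar (-(r * p.1)) •
        ((f (p.1 • b 0 + p.2.1 • b 1 + p.2.2 • b 2) : ℂ))) =
      ∫ c : ℝ, ∫ q : ℝ × ℝ, Real.fourierChar (-(r * c)) •
        ((f (c • b 0 + q.1 • b 1 + q.2 • b 2) : ℂ)) from
    MeasureTheory.integral_prod _ (hprodvol ▸ hFΦint)]
  have hzero : ∀ c : ℝ, (∫ q : ℝ × ℝ,
      Real.fourierChar (-(r * c)) • ((f (c • b 0 + q.1 • b 1 + q.2 • b 2) : ℂ))) = 0 := by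
    intro c
    simp only [Circle.smul_def]
    rw [integral_smul]
    have h1 : (∫ q : ℝ × ℝ, ((f (c • b 0 + q.1 • b 1 + q.2 • b 2) : ℂ))) =
        ((∫ st : ℝ × ℝ, f (c • b 0 + st.1 • b 1 + st.2 • b 2) : ℝ) : ℂ) := integral_ofReal
    rw [h1, h0 c]
    simp
  simp only [hzero]
  simp

/-- **Local Helgason support theorem in `ℝ³`.** If `f` is continuous with compact support
and its integrals over all affine 2-planes whose normal direction is within `δ` of a
fixed direction vanish, and the support of `f` lies on one side of one such plane,
then `f = 0`. -/
theorem helgason_support_planes (f : E3 → ℝ) (hf : Continuous f)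
    (hfc : HasCompactSupport f)
    (δ : ℝ) (hδ : 0 < δ) (ν₀ : E3) (hν₀ : ‖ν₀‖ = 1)
    (hrad : ∀ ν : E3, ‖ν‖ = 1 → ‖ν - ν₀‖ < δ → ∀ c : ℝ,
      ∀ v w : E3, ‖v‖ = 1 → ‖w‖ = 1 → ⟪v, w⟫ = 0 → ⟪ν, v⟫ = 0 → ⟪ν, w⟫ = 0 →
        ∫ st : ℝ × ℝ, f (c • ν + st.1 • v + st.2 • w) = 0)
    (hside : ∃ ν : E3, ∃ c : ℝ, ‖ν‖ = 1 ∧ ‖ν - ν₀‖ < δ ∧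
      ∀ x ∈ tsupport f, ⟪ν, x⟫ ≤ c) :
    ∀ x, f x = 0 := by
  classical
  set g : E3 → ℂ := fun x => (f x : ℂ) with hgdef
  have hg : Continuous g := Complex.continuous_ofReal.comp hf
  have hgc : HasCompactSupport g := hfc.comp_left (g := Complex.ofReal) Complex.ofReal_zero
  -- Step 1: the Fourier transform vanishes on the cone of good directions
  have key : ∀ ν : E3, ‖ν‖ = 1 → ‖ν - ν₀‖ < δ → ∀ r : ℝ, 𝓕 g (r • ν) = 0 := by
    intro ν hν hνδ r
    obtain ⟨b, hb0⟩ : ∃ b : OrthonormalBasis (Fin 3) ℝ E3, b 0 = ν := by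
      have card : Module.finrank ℝ E3 = Fintype.card (Fin 3) := by
        simp [finrank_euclideanSpace]
      have horth : Orthonormal ℝ (({0} : Set (Fin 3)).restrict (fun _ : Fin 3 => ν)) := by
        constructor
        · intro i; exact hν
        · intro i j hij
          exact absurd (Subtype.ext (by
            have hi := i.2; have hj := j.2
            simp only [Set.mem_singleton_iff] at hi hj
            rw [hi, hj])) hij
      obtain ⟨b, hb⟩ := horth.exists_orthonormalBasis_extension_of_card_eq card
      exact ⟨b, hb 0 rfl⟩
    have h0 : ∀ c : ℝ, ∫ st : ℝ × ℝ, f (c • b 0 + st.1 • b 1 + st.2 • b 2) = 0 := by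
      intro c
      rw [hb0]
      exact hrad ν hν hνδ c (b 1) (b 2) (b.orthonormal.1 1) (b.orthonormal.1 2)
        (b.orthonormal.2 (by decide)) (hb0 ▸ b.orthonormal.2 (by decide))
        (hb0 ▸ b.orthonormal.2 (by decide))
    have := helg_radon f hf hfc b r h0
    rwa [hb0] at this
  -- support radius
  obtain ⟨R, hR⟩ : ∃ R : ℝ, ∀ x ∈ tsupport f, ‖x‖ ≤ R := by
    obtain ⟨R, hR⟩ := hfc.isBounded.subset_closedBall (0 : E3)
    exact ⟨R, fun x hx => by simpa [Metric.mem_closedBall, dist_zero_right] using hR hx⟩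
  -- Step 2: the Fourier transform vanishes everywhere, by analytic continuation along lines
  have hall : ∀ ξ : E3, 𝓕 g ξ = 0 := by
    intro ξ
    set G : ℂ → ℂ := fun z =>
      ∫ x : E3, Complex.exp (-(2 * π * Complex.I) *
        (((⟪x, ξ⟫ : ℝ) : ℂ) + z * ((⟪x, ν₀⟫ : ℝ) : ℂ))) * g x with hGdef
    have hGdiff : Differentiable ℂ G := by
      apply helg_entire g hg hgc (fun x => ⟪x, ξ⟫) (fun x => ⟪x, ν₀⟫)
        (continuous_id.inner continuous_const) (continuous_id.inner continuous_const) R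
      intro x hx
      have hxs : x ∈ tsupport f := by
        apply subset_tsupport f
        intro hfx
        exact hx (by simp [hgdef, hfx])
      calc |⟪x, ν₀⟫| ≤ ‖x‖ * ‖ν₀‖ := abs_real_inner_le_norm x ν₀
        _ = ‖x‖ := by rw [hν₀, mul_one]
        _ ≤ R := hR x hxs
    have hGreal : ∀ t : ℝ, G (t : ℂ) = 𝓕 g (ξ + t • ν₀) := by
      intro t
      rw [Real.fourier_eq', hGdef]
      simp only
      congr 1
      funext x
      rw [smul_eq_mul]
      congr 1
      have : ⟪x, ξ + t • ν₀⟫ = ⟪x, ξ⟫ + t * ⟪x, ν₀⟫ := by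
        rw [inner_add_right, real_inner_smul_right]
      rw [this]
      push_cast
      ring
    set T : ℝ := 2 * ‖ξ‖ / δ + ‖ξ‖ + 1 with hTdef
    have hT : ∀ t : ℝ, T ≤ t → G (t : ℂ) = 0 := by
      intro t ht
      have hξ0 : (0:ℝ) ≤ ‖ξ‖ := norm_nonneg _
      have hq0 : (0:ℝ) ≤ 2 * ‖ξ‖ / δ := by positivity
      have htpos : 0 < t := by rw [hTdef] at ht; linarith
      set u : E3 := ξ + t • ν₀ with hu
      have htν : ‖t • ν₀‖ = t := by
        rw [norm_smul, hν₀, mul_one, Real.norm_eq_abs, abs_of_pos htpos]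
      have hul : t - ‖ξ‖ ≤ ‖u‖ := by
        have := norm_sub_norm_le (t • ν₀) (-ξ)
        simp only [norm_neg, sub_neg_eq_add] at this
        rw [htν] at this
        calc t - ‖ξ‖ ≤ ‖t • ν₀ + ξ‖ := this
          _ = ‖u‖ := by rw [hu, add_comm]
      have hupos : 0 < ‖u‖ := by rw [hTdef] at ht; linarith
      set ν : E3 := ‖u‖⁻¹ • u with hν'
      have hνnorm : ‖ν‖ = 1 := by
        rw [hν', norm_smul, Real.norm_eq_abs, abs_of_pos (inv_pos.2 hupos),
          inv_mul_cancel₀ hupos.ne']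
      have huν : u = ‖u‖ • ν := by
        rw [hν', smul_smul, mul_inv_cancel₀ hupos.ne', one_smul]
      have hdiff : ‖u - ‖u‖ • ν₀‖ ≤ 2 * ‖ξ‖ := by
        have h1 : u - ‖u‖ • ν₀ = ξ + (t - ‖u‖) • ν₀ := by
          rw [hu, sub_smul]; abel
        rw [h1]
        have h2 : ‖(t - ‖u‖) • ν₀‖ = |t - ‖u‖| := by
          rw [norm_smul, hν₀, mul_one, Real.norm_eq_abs]
        have h3 : |t - ‖u‖| ≤ ‖ξ‖ := by
          have := abs_norm_sub_norm_le (t • ν₀) u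
          rw [htν] at this
          have h4 : t • ν₀ - u = -ξ := by rw [hu]; abel
          rw [h4, norm_neg] at this
          exact this
        calc ‖ξ + (t - ‖u‖) • ν₀‖ ≤ ‖ξ‖ + ‖(t - ‖u‖) • ν₀‖ := norm_add_le _ _
          _ ≤ ‖ξ‖ + ‖ξ‖ := by rw [h2]; linarith
          _ = 2 * ‖ξ‖ := by ring
      have hclose : ‖ν - ν₀‖ < δ := by
        have h5 : ν - ν₀ = ‖u‖⁻¹ • (u - ‖u‖ • ν₀) := by
          rw [hν', smul_sub, smul_smul, inv_mul_cancel₀ hupos.ne', one_smul]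
        rw [h5, norm_smul, Real.norm_eq_abs, abs_of_pos (inv_pos.2 hupos)]
        rw [inv_mul_lt_iff₀ hupos]
        have h6 : 2 * ‖ξ‖ < δ * ‖u‖ := by
          have h7 : 2 * ‖ξ‖ / δ + 1 ≤ ‖u‖ := by rw [hTdef] at ht; linarith
          have := mul_le_mul_of_nonneg_left h7 hδ.le
          rw [mul_add, mul_div_cancel₀ _ hδ.ne'] at this
          linarith
        linarith [hdiff]
      rw [hGreal t]
      have : ξ + t • ν₀ = ‖u‖ • ν := by rw [← huν, hu]
      rw [this]
      exact key ν hνnorm hclose ‖u‖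
    have hGanalytic : AnalyticOnNhd ℂ G Set.univ := fun z _ => hGdiff.analyticAt z
    set z₀ : ℂ := ((T + 1 : ℝ) : ℂ) with hz₀
    have hfreq : ∃ᶠ z in nhdsWithin z₀ {z₀}ᶜ, G z = 0 := by
      have htend : Filter.Tendsto (fun n : ℕ => ((T + 1 + ((n : ℝ) + 1)⁻¹ : ℝ) : ℂ))
          Filter.atTop (nhdsWithin z₀ {z₀}ᶜ) := by
        rw [tendsto_nhdsWithin_iff]
        constructor
        · rw [hz₀]
          apply Filter.Tendsto.comp (Complex.continuous_ofReal.tendsto _)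
          have h8 : Filter.Tendsto (fun n : ℕ => ((n : ℝ) + 1)⁻¹) Filter.atTop (nhds 0) :=
            tendsto_one_div_add_atTop_nhds_zero_nat.congr (fun n => by rw [one_div])
          have := Filter.Tendsto.const_add (T + 1) h8
          simpa using this
        · filter_upwards with n
          simp only [Set.mem_compl_iff, Set.mem_singleton_iff, hz₀]
          intro hcontra
          have : (T + 1 + ((n : ℝ) + 1)⁻¹ : ℝ) = (T + 1 : ℝ) := by exact_mod_cast hcontra
          have hpos : (0:ℝ) < ((n : ℝ) + 1)⁻¹ := by positivity
          linarith
      apply htend.frequently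
      apply Filter.Frequently.of_forall
      intro n
      apply hT
      have hpos : (0:ℝ) < ((n : ℝ) + 1)⁻¹ := by positivity
      linarith
    have hG0all := hGanalytic.eqOn_zero_of_preconnected_of_frequently_eq_zero
      isPreconnected_univ (Set.mem_univ z₀) hfreq
    have hG0 : G 0 = 0 := hG0all (Set.mem_univ 0)
    have hfinal := hGreal 0
    rw [Complex.ofReal_zero, hG0, zero_smul, add_zero] at hfinal
    exact hfinal.symm
  -- Step 3: Fourier inversion
  have hgi : Integrable g := hg.integrable_of_hasCompactSupport hgc
  have h𝓕g : 𝓕 g = (fun _ : E3 => (0:ℂ)) := funext hall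
  have h2 : Integrable (𝓕 g) := by rw [h𝓕g]; exact integrable_zero _ _ _
  intro x
  have hinv := hgi.fourierInv_fourier_eq h2 (hg.continuousAt (x := x))
  rw [h𝓕g] at hinv
  have hzero : (𝓕⁻ (fun _ : E3 => (0:ℂ))) x = 0 := by
    rw [Real.fourierInv_eq]
    simp
  rw [hzero] at hinv
  have : (f x : ℂ) = 0 := hinv.symm
  exact_mod_cast this
end
end
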